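/- Let f̂ be L-smooth and convex, and consider one iteration of the Bant update x^{t+1} = x^t − γ Σ_{i=1}^n 𝟙[f̂(x^t) − f̂(x^t − γg_i^t) > 0] ω_i^t g_i^t with momentum weights ω_i^t summing to one. Then, with 𝒢 the set of honest workers at iteration t, the following descent inequality holds: f̂(x^{t+1}) ≤ f̂(x^t) − (γβ/n)⟨∇f̂(x^t), Σ_{i∈𝒢} g_i^t⟩ + (Lγ²β/(2n))Σ_{i∈𝒢}‖g_i^t‖². -/

import Mathlib

open scoped Classical RealInnerProductSpace

noncomputable section

abbrev Vec (dd : ℕ) := EuclideanSpace ℝ (Fin dd)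

/-!
By `L`-smoothness, worker `i`'s trial step decreases `f̂` by at least
`γ⟨∇f̂(x), gᵢ⟩ − Lγ²‖gᵢ‖²/2`. The new iterate is a convex combination of `x` and the accepted
trial points, so by Jensen the decrease of `f̂` is at least `∑ᵢ ωᵢ [f̂(x) − f̂(x − γgᵢ)]₀`.
The momentum part of `ωᵢ` contributes nonnegatively, and the score part is, by Cauchy–Schwarz,
at least `β/n` times the sum of all positive decreases, hence of the honest workers' decreases.
-/

open Set Finset

section Smooth

variable {F : Type*} [NormedAddCommGroup F] [InnerProductSpace ℝ F] [CompleteSpace F]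
  {f : F → ℝ}

lemma hasDerivAt_apply_add_smul {x v : F} {t : ℝ} (hf : DifferentiableAt ℝ f (x + t • v)) :
    HasDerivAt (fun s : ℝ => f (x + s • v)) ⟪gradient f (x + t • v), v⟫ t := by
  have hline : HasDerivAt (fun s : ℝ => x + s • v) v t := by
    simpa using ((hasDerivAt_id t).smul_const v).const_add x
  simpa [InnerProductSpace.toDual_apply_apply, Function.comp_def] using
    (hasGradientAt_iff_hasFDerivAt.1 hf.hasGradientAt).comp_hasDerivAt t hline

lemma apply_le_add_inner_gradient_add_sq {L : ℝ} (hf : Differentiable ℝ f)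
    (hgrad : ∀ y z, ‖gradient f y - gradient f z‖ ≤ L * ‖y - z‖) (x y : F) :
    f y ≤ f x + ⟪gradient f x, y - x⟫ + L / 2 * ‖y - x‖ ^ 2 := by
  set v := y - x
  set ψ : ℝ → ℝ := fun t => f (x + t • v) - t * ⟪gradient f x, v⟫ - L / 2 * ‖v‖ ^ 2 * t ^ 2
  have hψ : ∀ t, HasDerivAt ψ
      (⟪gradient f (x + t • v) - gradient f x, v⟫ - L * ‖v‖ ^ 2 * t) t := by
    intro t
    refine (((hasDerivAt_apply_add_smul (hf _)).sub (hasDerivAt_mul_const _)).sub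
      ((hasDerivAt_pow 2 t).const_mul (L / 2 * ‖v‖ ^ 2))).congr_deriv ?_
    rw [inner_sub_left]
    push_cast
    ring
  have hanti : AntitoneOn ψ (Ici 0) := by
    refine antitoneOn_of_hasDerivWithinAt_nonpos (convex_Ici 0)
      (fun t _ => (hψ t).continuousAt.continuousWithinAt) (fun t _ => (hψ t).hasDerivWithinAt)
      fun t ht => ?_
    rw [interior_Ici] at ht
    have : ⟪gradient f (x + t • v) - gradient f x, v⟫ ≤ L * ‖v‖ ^ 2 * t :=
      calc ⟪gradient f (x + t • v) - gradient f x, v⟫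
          ≤ ‖gradient f (x + t • v) - gradient f x‖ * ‖v‖ := real_inner_le_norm _ _
        _ ≤ L * ‖t • v‖ * ‖v‖ := by
            gcongr
            simpa using hgrad (x + t • v) x
        _ = L * ‖v‖ ^ 2 * t := by
            rw [norm_smul, Real.norm_of_nonneg (le_of_lt ht)]
            ring
    linarith
  have h01 := hanti self_mem_Ici (zero_le_one' ℝ) zero_le_one
  simp only [ψ, zero_smul, add_zero, one_smul, v, add_sub_cancel] at h01
  linarith

lemma mul_inner_gradient_sub_le_sub_apply_sub_smul {L : ℝ} (hf : Differentiable ℝ f)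
    (hgrad : ∀ y z, ‖gradient f y - gradient f z‖ ≤ L * ‖y - z‖) (x v : F) (γ : ℝ) :
    γ * ⟪gradient f x, v⟫ - L * γ ^ 2 / 2 * ‖v‖ ^ 2 ≤ f x - f (x - γ • v) := by
  have := apply_le_add_inner_gradient_add_sq hf hgrad x (x - γ • v)
  rw [sub_sub_cancel_left, inner_neg_right, norm_neg, real_inner_smul_right, norm_smul,
    mul_pow, Real.norm_eq_abs, sq_abs] at this
  linarith

end Smooth

lemma ConvexOn.map_add_sum_smul_le {E ι : Type*} [AddCommGroup E] [Module ℝ E] [Fintype ι]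
    {f : E → ℝ} (hf : ConvexOn ℝ univ f) {c : ι → ℝ} (hc0 : ∀ i, 0 ≤ c i)
    (hc1 : ∑ i, c i ≤ 1) (x : E) (d : ι → E) :
    f (x + ∑ i, c i • d i) ≤ f x + ∑ i, c i * (f (x + d i) - f x) := by
  -- Jensen for the probability weights `1 - ∑ c` at `x` and `c i` at `x + d i`.
  let w : Option ι → ℝ := fun o => o.elim (1 - ∑ i, c i) c
  let p : Option ι → E := fun o => o.elim x (x + d ·)
  have hJensen := hf.map_sum_le (t := univ) (w := w) (p := p)
    (fun o _ => by cases o <;> simp [w, hc0, hc1]) (by simp [w, Fintype.sum_option])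
    (fun _ _ => mem_univ _)
  have hcomb : ∑ o, w o • p o = x + ∑ i, c i • d i := by
    simp only [w, p, Fintype.sum_option, Option.elim, smul_add, sum_add_distrib, sub_smul,
      ← sum_smul, one_smul]
    abel
  have hval : ∑ o, w o • f (p o) = f x + ∑ i, c i * (f (x + d i) - f x) := by
    simp only [w, p, Fintype.sum_option, Option.elim, smul_eq_mul, mul_sub, sum_sub_distrib,
      ← sum_mul]
    ring
  rwa [hcomb, hval] at hJensen

section Bant

variable {ι : Type*} [Fintype ι]

/-- The normalised Bant score of the trial-loss decreases `a i = f̂(x) − f̂(x − γ gᵢ)`. -/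
def bantScore (a : ι → ℝ) (i : ι) : ℝ :=
  if ∀ j, a j ≤ 0 then 1 / Fintype.card ι else max (a i) 0 / ∑ j, max (a j) 0

def bantWeight (β : ℝ) (wprev a : ι → ℝ) (i : ι) : ℝ :=
  (1 - β) * wprev i + β * bantScore a i

lemma sum_max_zero_pos_of_not_forall_nonpos {a : ι → ℝ} (h : ¬ ∀ j, a j ≤ 0) :
    0 < ∑ j, max (a j) 0 := by
  obtain ⟨j, hj⟩ := not_forall.1 h
  exact sum_pos' (fun i _ => le_max_right _ _)
    ⟨j, mem_univ j, (not_le.1 hj).trans_le (le_max_left _ _)⟩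

lemma bantScore_nonneg (a : ι → ℝ) (i : ι) : 0 ≤ bantScore a i := by
  unfold bantScore
  split_ifs with h
  · positivity
  · exact div_nonneg (le_max_right _ _) (sum_max_zero_pos_of_not_forall_nonpos h).le

lemma sum_bantScore [Nonempty ι] (a : ι → ℝ) : ∑ i, bantScore a i = 1 := by
  unfold bantScore
  split_ifs with h
  · simp
  · rw [← sum_div, div_self (sum_max_zero_pos_of_not_forall_nonpos h).ne']

lemma inv_card_mul_sum_max_le_sum_bantScore_mul (a : ι → ℝ) :
    (Fintype.card ι : ℝ)⁻¹ * ∑ i, max (a i) 0 ≤ ∑ i, bantScore a i * max (a i) 0 := by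
  unfold bantScore
  split_ifs with h
  · simp [fun i => max_eq_right (h i)]
  · set S := ∑ j, max (a j) 0
    have hS := sum_max_zero_pos_of_not_forall_nonpos h
    have hcard : (0 : ℝ) < Fintype.card ι := by
      obtain ⟨j, -⟩ := not_forall.1 h
      exact_mod_cast Fintype.card_pos_iff.2 ⟨j⟩
    have hCS : S ^ 2 ≤ Fintype.card ι * ∑ i, max (a i) 0 ^ 2 := by
      simpa using sq_sum_le_card_mul_sum_sq (s := univ) (f := fun i => max (a i) 0)
    calc (Fintype.card ι : ℝ)⁻¹ * S = S ^ 2 / Fintype.card ι / S := by field_simp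
      _ ≤ (∑ i, max (a i) 0 ^ 2) / S := by gcongr; rwa [div_le_iff₀' hcard]
      _ = ∑ i, max (a i) 0 / S * max (a i) 0 := by
        rw [sum_div]; exact sum_congr rfl fun i _ => by ring

variable {β : ℝ} {wprev : ι → ℝ}

lemma bantWeight_nonneg (hβ0 : 0 ≤ β) (hβ1 : β ≤ 1) (hwprev0 : ∀ i, 0 ≤ wprev i)
    (a : ι → ℝ) (i : ι) : 0 ≤ bantWeight β wprev a i :=
  add_nonneg (mul_nonneg (sub_nonneg.2 hβ1) (hwprev0 i)) (mul_nonneg hβ0 (bantScore_nonneg a i))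

lemma sum_bantWeight [Nonempty ι] (hwprev1 : ∑ i, wprev i = 1) (a : ι → ℝ) :
    ∑ i, bantWeight β wprev a i = 1 := by
  simp only [bantWeight, sum_add_distrib, ← mul_sum, hwprev1, sum_bantScore]
  ring

lemma sum_ite_bantWeight_le_one [Nonempty ι] (hβ0 : 0 ≤ β) (hβ1 : β ≤ 1)
    (hwprev0 : ∀ i, 0 ≤ wprev i) (hwprev1 : ∑ i, wprev i = 1) (a : ι → ℝ) (p : ι → Prop)
    [DecidablePred p] : ∑ i, (if p i then bantWeight β wprev a i else 0) ≤ 1 := by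
  refine (sum_le_sum fun i _ => ?_).trans_eq (sum_bantWeight (β := β) hwprev1 a)
  split_ifs
  exacts [le_rfl, bantWeight_nonneg hβ0 hβ1 hwprev0 a i]

lemma div_card_mul_sum_le_sum_ite_bantWeight_mul (hβ0 : 0 ≤ β) (hβ1 : β ≤ 1)
    (hwprev0 : ∀ i, 0 ≤ wprev i) (a : ι → ℝ) (s : Finset ι) :
    β / Fintype.card ι * ∑ i ∈ s, a i
      ≤ ∑ i, (if 0 < a i then bantWeight β wprev a i else 0) * a i := by
  have hacc : ∀ i, (if 0 < a i then bantWeight β wprev a i else 0) * a i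
      = bantWeight β wprev a i * max (a i) 0 := by
    intro i
    split_ifs with h
    · rw [max_eq_left h.le]
    · rw [max_eq_right (not_lt.1 h), zero_mul, mul_zero]
  have hs : ∑ i ∈ s, a i ≤ ∑ i, max (a i) 0 :=
    (sum_le_sum fun i _ => le_max_left _ _).trans
      (sum_le_sum_of_subset_of_nonneg (subset_univ s) fun i _ _ => le_max_right _ _)
  calc β / Fintype.card ι * ∑ i ∈ s, a i
      ≤ β * ((Fintype.card ι : ℝ)⁻¹ * ∑ i, max (a i) 0) := by
        rw [div_eq_mul_inv, mul_assoc]; gcongr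
    _ ≤ β * ∑ i, bantScore a i * max (a i) 0 :=
        mul_le_mul_of_nonneg_left (inv_card_mul_sum_max_le_sum_bantScore_mul a) hβ0
    _ ≤ ∑ i, bantWeight β wprev a i * max (a i) 0 := by
        rw [mul_sum]
        refine sum_le_sum fun i _ => ?_
        rw [bantWeight, add_mul, mul_assoc β]
        exact le_add_of_nonneg_left
          (mul_nonneg (mul_nonneg (sub_nonneg.2 hβ1) (hwprev0 i)) (le_max_right _ _))
    _ = _ := (sum_congr rfl fun i _ => hacc i).symm

end Bant

theorem bant_descent_lemma_general
    (dd n : ℕ)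
    (γ β L : ℝ) (hβ0 : 0 < β) (hβ1 : β ≤ 1)
    (fhat : Vec dd → ℝ)
    -- Assumption 1: L-smoothness of the trial function
    (hdiff : Differentiable ℝ fhat)
    (hsmooth : ∀ y z, ‖gradient fhat y - gradient fhat z‖ ≤ L * ‖y - z‖)
    -- Assumption 2(b): convexity of the trial function
    (hconv : ConvexOn ℝ Set.univ fhat)
    -- current iterate and received (possibly Byzantine) vectors
    (x : Vec dd) (g : Fin n → Vec dd)
    -- previous-iteration weights: nonnegative, summing to one
    (wprev : Fin n → ℝ) (hwprev0 : ∀ i, 0 ≤ wprev i) (hwprev1 : ∑ i, wprev i = 1)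
    -- Bant weights with momentum β
    (w : Fin n → ℝ)
    (hw : ∀ i, w i = (1 - β) * wprev i
      + β * (if ∀ j, fhat x - fhat (x - γ • g j) ≤ 0
             then 1 / (n : ℝ)
             else max (fhat x - fhat (x - γ • g i)) 0
                  / ∑ j, max (fhat x - fhat (x - γ • g j)) 0))
    -- honest workers at this iteration
    (𝒢 : Finset (Fin n)) :
    fhat (x - γ • ∑ i, (if 0 < fhat x - fhat (x - γ • g i) then w i else 0) • g i)
      ≤ fhat x - (γ * β / (n : ℝ)) * ⟪gradient fhat x, ∑ i ∈ 𝒢, g i⟫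
        + (L * γ ^ 2 * β / (2 * (n : ℝ))) * ∑ i ∈ 𝒢, ‖g i‖ ^ 2 := by
  set a : Fin n → ℝ := fun i => fhat x - fhat (x - γ • g i)
  have : Nonempty (Fin n) := by
    by_contra h
    simp [not_nonempty_iff.1 h] at hwprev1
  obtain rfl : w = bantWeight β wprev a :=
    funext fun i => by rw [hw i, bantWeight, bantScore, Fintype.card_fin]; congr
  set c : Fin n → ℝ := fun i => if 0 < a i then bantWeight β wprev a i else 0
  have hc0 : ∀ i, 0 ≤ c i := fun i => ite_nonneg (bantWeight_nonneg hβ0.le hβ1 hwprev0 a i) le_rfl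
  have hc1 : ∑ i, c i ≤ 1 := sum_ite_bantWeight_le_one hβ0.le hβ1 hwprev0 hwprev1 a _
  have hstep : x - γ • ∑ i, c i • g i = x + ∑ i, c i • -(γ • g i) := by
    simp only [smul_sum, smul_neg, smul_comm γ, sum_neg_distrib, sub_eq_add_neg]
  have haccepted := div_card_mul_sum_le_sum_ite_bantWeight_mul hβ0.le hβ1 hwprev0 a 𝒢
  rw [Fintype.card_fin] at haccepted
  calc fhat (x - γ • ∑ i, c i • g i)
      ≤ fhat x + ∑ i, c i * (fhat (x + -(γ • g i)) - fhat x) :=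
        hstep ▸ hconv.map_add_sum_smul_le hc0 hc1 x _
    _ = fhat x - ∑ i, c i * a i := by
        simp only [a, ← sub_eq_add_neg, mul_sub, sum_sub_distrib]
        ring
    _ ≤ fhat x - β / n * ∑ i ∈ 𝒢, a i := by linarith
    _ ≤ fhat x - β / n * ∑ i ∈ 𝒢, (γ * ⟪gradient fhat x, g i⟫ - L * γ ^ 2 / 2 * ‖g i‖ ^ 2) := by
        gcongr with i
        exact mul_inner_gradient_sub_le_sub_apply_sub_smul hdiff hsmooth x (g i) γ
    _ = _ := by
        rw [sum_sub_distrib, ← mul_sum, ← mul_sum, ← inner_sum]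
        ring

/-- **Lemma 3 (descent lemma for one Bant iteration).**
Let `fhat` be `L`-smooth and convex, and consider one iteration of the Bant update
`x⁺ = x − γ Σᵢ 𝟙[f̂(x) − f̂(x − γgᵢ) > 0] ωᵢ gᵢ`, where the momentum weights `ωᵢ`
are built from nonnegative previous weights summing to one. Then, with `𝒢` the set
of honest workers at this iteration,
`f̂(x⁺) ≤ f̂(x) − (γβ/n)⟨∇f̂(x), Σ_{i∈𝒢} gᵢ⟩ + (Lγ²β/(2n))Σ_{i∈𝒢}‖gᵢ‖²`. -/
theorem bant_descent_lemma
    (dd n : ℕ) (hn : 0 < n)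
    (γ β L : ℝ) (hL : 0 < L) (hγ : 0 < γ) (hβ0 : 0 < β) (hβ1 : β ≤ 1)
    (fhat : Vec dd → ℝ)
    -- Assumption 1: L-smoothness of the trial function
    (hdiff : Differentiable ℝ fhat)
    (hsmooth : ∀ y z, ‖gradient fhat y - gradient fhat z‖ ≤ L * ‖y - z‖)
    -- Assumption 2(b): convexity of the trial function
    (hconv : ConvexOn ℝ Set.univ fhat)
    -- current iterate and received (possibly Byzantine) vectors
    (x : Vec dd) (g : Fin n → Vec dd)
    -- previous-iteration weights: nonnegative, summing to one
    (wprev : Fin n → ℝ) (hwprev0 : ∀ i, 0 ≤ wprev i) (hwprev1 : ∑ i, wprev i = 1)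
    -- Bant weights with momentum β
    (w : Fin n → ℝ)
    (hw : ∀ i, w i = (1 - β) * wprev i
      + β * (if ∀ j, fhat x - fhat (x - γ • g j) ≤ 0
             then 1 / (n : ℝ)
             else max (fhat x - fhat (x - γ • g i)) 0
                  / ∑ j, max (fhat x - fhat (x - γ • g j)) 0))
    -- honest workers at this iteration
    (𝒢 : Finset (Fin n)) :
    fhat (x - γ • ∑ i, (if 0 < fhat x - fhat (x - γ • g i) then w i else 0) • g i)
      ≤ fhat x - (γ * β / (n : ℝ)) * ⟪gradient fhat x, ∑ i ∈ 𝒢, g i⟫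
        + (L * γ ^ 2 * β / (2 * (n : ℝ))) * ∑ i ∈ 𝒢, ‖g i‖ ^ 2 :=
  bant_descent_lemma_general dd n γ β L hβ0 hβ1 fhat hdiff hsmooth hconv x g wprev hwprev0 hwprev1 w
    hw 𝒢
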